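/- For f, g ∈ L^∞([-π,π]) and n ≥ 1, the n×n Toeplitz matrices satisfy T_n(fg) − T_n(f)T_n(g) = P_n H(f) H(g̃) P_n + Q_n H(f̃) H(g) Q_n, where f̃(θ)=f(−θ), g̃(θ)=g(−θ), P_n is the projection onto the first n coordinates of ℓ²(ℕ), and Q_n is the flip operator with (Q_n)_{i,j}=1 iff i+j=n+1. -/

import Mathlib

open MeasureTheory Real

/-- `k`-th Fourier coefficient of `f : [-π,π] → ℂ`:  `f_k = (1/2π) ∫_{-π}^{π} f(x) e^{-ikx} dx`. -/
noncomputable def fc (f : ℝ → ℂ) (k : ℤ) : ℂ :=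
  (1 / (2 * π)) * ∫ x in (-π)..π, f x * Complex.exp (-(Complex.I * k * x))

/-- The squared norm `|||f|||² = Σ_{k∈ℤ} |k| |f_k|²`. -/
noncomputable def tnormSq (f : ℝ → ℂ) : ℝ := ∑' k : ℤ, |(k : ℝ)| * ‖fc f k‖ ^ 2

/-- The `n×n` Toeplitz matrix `T_n(f) = [f_{i-j}]_{i,j=1}^n`. -/
noncomputable def Tmat (f : ℝ → ℂ) (n : ℕ) : Matrix (Fin n) (Fin n) ℂ :=
  Matrix.of fun i j : Fin n => fc f ((i : ℤ) - (j : ℤ))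

/-- The singular values of a complex square matrix: square roots of the eigenvalues of `Aᴴ A`. -/
noncomputable def singVals {n : ℕ} (A : Matrix (Fin n) (Fin n) ℂ) : Fin n → ℝ :=
  fun j => Real.sqrt ((Matrix.isHermitian_conjTranspose_mul_self A).eigenvalues j)

/-- The essential range of `f` as a function on `[-π,π]`. -/
def essRange (f : ℝ → ℂ) : Set ℂ :=
  {z : ℂ | ∀ ε > 0, 0 < volume {x ∈ Set.Icc (-π) π | dist (f x) z < ε}}

/-! ### Auxiliary material -/

open scoped ComplexConjugate

instance : Fact (0 < 2 * π) := ⟨by positivity⟩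

lemma fc_eq_fourierCoeff (f : ℝ → ℂ) (k : ℤ) :
    fc f k = fourierCoeff (AddCircle.liftIoc (2 * π) (-π) f) k := by
  rw [fourierCoeff_liftIoc_eq, fourierCoeffOn_eq_integral, fc]
  rw [show -π + 2 * π = π by ring]
  rw [Complex.real_smul]
  congr 1
  · push_cast
    congr 1
    ring
  · apply intervalIntegral.integral_congr
    intro x _
    simp only
    rw [fourier_coe_apply, smul_eq_mul, mul_comm]
    congr 1
    have hπ : (π : ℂ) ≠ 0 := by
      simpa using Real.pi_ne_zero
    field_simp
    congr 1
    rw [eq_div_iff (Complex.ofReal_ne_zero.mpr (mul_ne_zero Real.pi_ne_zero (by norm_num)))]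
    push_cast
    ring

lemma fc_neg (g : ℝ → ℂ) (m : ℤ) : fc (fun x => g (-x)) m = fc g (-m) := by
  unfold fc
  congr 1
  have h := intervalIntegral.integral_comp_neg (a := -π) (b := π)
      (f := fun x => g x * Complex.exp (-(Complex.I * ((-m : ℤ) : ℂ) * x)))
  simp only [neg_neg] at h
  rw [← h]
  apply intervalIntegral.integral_congr
  intro x _
  push_cast
  ring_nf

lemma fc_congr {f f' : ℝ → ℂ} (h : f =ᵐ[volume.restrict (Set.Ioc (-π) π)] f') (k : ℤ) :
    fc f k = fc f' k := by
  unfold fc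
  congr 1
  apply intervalIntegral.integral_congr_ae
  have h2 := (ae_restrict_iff' measurableSet_Ioc).mp h
  filter_upwards [h2] with x hx hx'
  rw [Set.uIoc_of_le (by linarith [Real.pi_pos] : -π ≤ π)] at hx'
  rw [hx hx']

lemma liftIoc_sm {f : ℝ → ℂ} (hsm : StronglyMeasurable f) :
    StronglyMeasurable (AddCircle.liftIoc (2 * π) (-π) f) :=
  (hsm.comp_measurable measurable_subtype_coe).comp_measurable
    (AddCircle.measurableEquivIoc (2 * π) (-π)).measurable

lemma memLp_lift {f : ℝ → ℂ} (hsm : StronglyMeasurable f)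
    (hf : MemLp f ⊤ (volume.restrict (Set.Icc (-π) π))) :
    MemLp (AddCircle.liftIoc (2 * π) (-π) f) 2 (@AddCircle.haarAddCircle (2 * π) _) := by
  have hmeas := liftIoc_sm hsm
  have hIoc : MemLp f ⊤ (volume.restrict (Set.Ioc (-π) π)) :=
    hf.mono_measure (Measure.restrict_mono Set.Ioc_subset_Icc_self le_rfl)
  haveI : IsFiniteMeasure (volume.restrict (Set.Ioc (-π) π)) := by
    constructor
    rw [Measure.restrict_apply_univ]
    simp [Real.volume_Ioc]
  have h2 : MemLp f 2 (volume.restrict (Set.Ioc (-π) π)) := hIoc.mono_exponent le_top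
  have hcomp : MemLp ((AddCircle.liftIoc (2 * π) (-π) f) ∘ ((↑) : ℝ → AddCircle (2 * π))) 2
      (volume.restrict (Set.Ioc (-π) (-π + 2 * π))) := by
    rw [show -π + 2 * π = π by ring]
    refine MemLp.ae_eq ?_ h2
    filter_upwards [ae_restrict_mem measurableSet_Ioc] with x hx
    rw [Function.comp_apply, AddCircle.liftIoc_coe_apply]
    constructor
    · exact hx.1
    · linarith [hx.2]
  have hmk := AddCircle.measurePreserving_mk (T := 2 * π) (-π)
  have hv : MemLp (AddCircle.liftIoc (2 * π) (-π) f) 2 (volume : Measure (AddCircle (2 * π))) := by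
    rw [← hmk.map_eq]
    exact (memLp_map_measure_iff hmeas.aestronglyMeasurable
      AddCircle.measurable_mk'.aemeasurable).mpr hcomp
  have hs := hv.smul_measure (c := (ENNReal.ofReal (2 * π))⁻¹)
    (by simp [ENNReal.inv_ne_top, ENNReal.ofReal_eq_zero]; positivity)
  rwa [AddCircle.volume_eq_smul_haarAddCircle, smul_smul, ENNReal.inv_mul_cancel, one_smul] at hs
  · simp [ENNReal.ofReal_eq_zero, not_le]
    positivity
  · exact ENNReal.ofReal_ne_top

section Conv

variable {T : ℝ} [hT : Fact (0 < T)]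

lemma fourierCoeff_congr_ae' {F F' : AddCircle T → ℂ}
    (h : F =ᵐ[@AddCircle.haarAddCircle T _] F') (k : ℤ) :
    fourierCoeff F k = fourierCoeff F' k := by
  unfold fourierCoeff
  apply integral_congr_ae
  filter_upwards [h] with t ht
  rw [ht]

lemma fourierCoeff_conv (F G : AddCircle T → ℂ)
    (hFm : StronglyMeasurable F) (hGm : StronglyMeasurable G)
    (hF : MemLp F 2 (@AddCircle.haarAddCircle T _))
    (hG : MemLp G 2 (@AddCircle.haarAddCircle T _)) (m : ℤ) :
    Summable (fun k : ℤ => fourierCoeff F (m - k) * fourierCoeff G k) ∧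
      fourierCoeff (fun t => F t * G t) m
        = ∑' k : ℤ, fourierCoeff F (m - k) * fourierCoeff G k := by
  clear hGm
  set μ := @AddCircle.haarAddCircle T _ with hμ
  set u : AddCircle T → ℂ := fun t => conj (fourier (-m) t * F t) with hu_def
  have hum : StronglyMeasurable u := by
    apply Continuous.comp_stronglyMeasurable continuous_star
    exact (fourier (-m)).continuous.stronglyMeasurable.mul hFm
  have hu : MemLp u 2 μ := by
    refine hF.of_le hum.aestronglyMeasurable (Filter.Eventually.of_forall fun t => ?_)
    have : ‖u t‖ = ‖F t‖ := by
      rw [hu_def]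
      simp only [RCLike.norm_conj, norm_mul]
      have : ‖fourier (-m) t‖ = 1 := Circle.norm_coe _
      rw [this, one_mul]
    rw [this]
  set uLp := hu.toLp u with huL
  set gLp := hG.toLp G with hgL
  have hcoeU : ∀ k : ℤ, fourierCoeff (↑uLp : AddCircle T → ℂ) k
      = conj (fourierCoeff F (m - k)) := by
    intro k
    rw [fourierCoeff_congr_ae' (MemLp.coeFn_toLp hu)]
    calc fourierCoeff u k = ∫ t, fourier (-k) t • u t ∂μ := rfl
      _ = ∫ t, conj (fourier (-(m - k)) t • F t) ∂μ := by
          apply integral_congr_ae (Filter.Eventually.of_forall fun t => ?_)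
          simp only [hu_def, smul_eq_mul, map_mul, ← fourier_neg, neg_neg]
          rw [← mul_assoc, ← fourier_add, neg_add_eq_sub]
      _ = conj (∫ t, fourier (-(m - k)) t • F t ∂μ) := integral_conj
      _ = conj (fourierCoeff F (m - k)) := rfl
  have hcoeG : ∀ k : ℤ, fourierCoeff (↑gLp : AddCircle T → ℂ) k = fourierCoeff G k :=
    fun k => fourierCoeff_congr_ae' (MemLp.coeFn_toLp hG) k
  have hkey : ∀ k : ℤ,
      (inner ℂ uLp (fourierBasis k) : ℂ) * inner ℂ (fourierBasis k) gLp
        = fourierCoeff F (m - k) * fourierCoeff G k := by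
    intro k
    have h1 : (inner ℂ (fourierBasis (T := T) k) uLp : ℂ) = conj (fourierCoeff F (m - k)) := by
      rw [← HilbertBasis.repr_apply_apply, fourierBasis_repr, hcoeU]
    have h2 : (inner ℂ (fourierBasis (T := T) k) gLp : ℂ) = fourierCoeff G k := by
      rw [← HilbertBasis.repr_apply_apply, fourierBasis_repr, hcoeG]
    rw [← inner_conj_symm uLp (fourierBasis k), h1, h2, Complex.conj_conj]
  have hsum := (fourierBasis (T := T)).summable_inner_mul_inner uLp gLp
  have hts := (fourierBasis (T := T)).tsum_inner_mul_inner uLp gLp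
  constructor
  · exact hsum.congr hkey
  · have h3 : ∑' k : ℤ, fourierCoeff F (m - k) * fourierCoeff G k
        = (inner ℂ uLp gLp : ℂ) := by
      rw [← hts]
      exact tsum_congr fun k => (hkey k).symm
    rw [h3, MeasureTheory.L2.inner_def]
    have h4 : ∫ t, (inner ℂ (uLp t) (gLp t) : ℂ) ∂μ = ∫ t, fourier (-m) t • (F t * G t) ∂μ := by
      apply integral_congr_ae
      filter_upwards [MemLp.coeFn_toLp hu, MemLp.coeFn_toLp hG] with t h5 h6
      rw [h5, h6, RCLike.inner_apply, hu_def]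
      simp only [Complex.conj_conj, smul_eq_mul]
      ring
    rw [h4]
    rfl

end Conv

lemma tsum_sum_type' {α β : Type*} {f : α ⊕ β → ℂ} (hf : Summable f) :
    ∑' x, f x = (∑' a, f (Sum.inl a)) + ∑' b, f (Sum.inr b) := by
  rw [← Summable.tsum_add_tsum_compl (s := Set.range (Sum.inl : α → α ⊕ β))
    (hf.subtype _) (hf.subtype _)]
  congr 1
  · exact ((Equiv.ofInjective Sum.inl Sum.inl_injective).tsum_eq
      (fun x : Set.range (Sum.inl : α → α ⊕ β) => f x)).symm
  · rw [show (Set.range (Sum.inl : α → α ⊕ β))ᶜ = Set.range Sum.inr from Set.compl_range_inl]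
    exact ((Equiv.ofInjective Sum.inr Sum.inr_injective).tsum_eq
      (fun x : Set.range (Sum.inr : β → α ⊕ β) => f x)).symm

noncomputable def intSplit (n : ℕ) : (Fin n ⊕ (ℕ+ ⊕ ℕ+)) ≃ ℤ := by
  apply Equiv.ofBijective
    (Sum.elim (fun l : Fin n => (l : ℤ))
      (Sum.elim (fun k : ℕ+ => -(k : ℤ)) (fun k : ℕ+ => (n : ℤ) + (k : ℤ) - 1)))
  constructor
  · rintro (⟨a, ha⟩ | (⟨a, ha⟩ | ⟨a, ha⟩)) (⟨b, hb⟩ | (⟨b, hb⟩ | ⟨b, hb⟩)) h <;>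
      simp only [Sum.elim_inl, Sum.elim_inr, Sum.elim, Fin.val_mk, PNat.mk_coe] at h <;>
      simp only [Sum.inl.injEq, Sum.inr.injEq, Fin.mk.injEq, ← PNat.coe_inj, PNat.mk_coe,
        reduceCtorEq] <;>
      first | omega | (congr 2; omega)
  · intro l
    rcases lt_or_ge l 0 with h0 | h0
    · refine ⟨Sum.inr (Sum.inl ⟨(-l).toNat, by omega⟩), ?_⟩
      simp only [Sum.elim_inr, Sum.elim_inl, Sum.elim, PNat.mk_coe]
      omega
    · rcases lt_or_ge l (n : ℤ) with h1 | h1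
      · exact ⟨Sum.inl ⟨l.toNat, by omega⟩, by simp; omega⟩
      · refine ⟨Sum.inr (Sum.inr ⟨(l - n + 1).toNat, by omega⟩), ?_⟩
        simp only [Sum.elim_inr, Sum.elim, PNat.mk_coe]
        omega

lemma tsum_int_split (φ : ℤ → ℂ) (hφ : Summable φ) (n : ℕ) :
    ∑' l : ℤ, φ l = (∑ l : Fin n, φ (l : ℤ)) +
      ((∑' k : ℕ+, φ (-(k : ℤ))) + ∑' k : ℕ+, φ ((n : ℤ) + (k : ℤ) - 1)) := by
  rw [← (intSplit n).tsum_eq φ]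
  have h1 : Summable (fun x => φ (intSplit n x)) := ((intSplit n).summable_iff).mpr hφ
  rw [tsum_sum_type' h1,
    tsum_sum_type' (f := fun b : ℕ+ ⊕ ℕ+ => φ (intSplit n (Sum.inr b)))
      (h1.comp_injective Sum.inr_injective)]
  rw [tsum_fintype]
  rfl

set_option maxHeartbeats 1000000 in
/-- For bounded `f, g` and `n ≥ 1`:
`T_n(fg) − T_n(f)T_n(g) = P_n H(f)H(g̃) P_n + Q_n H(f̃)H(g) Q_n`, written entrywise
(with 0-based indices `i,j`, corresponding to 1-based indices `i+1, j+1`). -/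
theorem stmt8 (f g : ℝ → ℂ)
    (hf : MemLp f ⊤ (volume.restrict (Set.Icc (-π) π)))
    (hg : MemLp g ⊤ (volume.restrict (Set.Icc (-π) π)))
    (n : ℕ) (hn : 1 ≤ n) :
    Tmat (fun x => f x * g x) n - Tmat f n * Tmat g n =
      Matrix.of (fun i j : Fin n =>
        (∑' k : ℕ+, fc f (((i : ℤ) + 1) + (k : ℤ) - 1) *
            fc (fun x => g (-x)) ((k : ℤ) + ((j : ℤ) + 1) - 1)) +
        ∑' k : ℕ+, fc (fun x => f (-x)) (((n : ℤ) - (i : ℤ)) + (k : ℤ) - 1) *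
            fc g ((k : ℤ) + ((n : ℤ) - (j : ℤ)) - 1)) := by
  -- pass to strongly measurable representatives
  set f' : ℝ → ℂ := hf.1.mk f with hf'def
  set g' : ℝ → ℂ := hg.1.mk g with hg'def
  have hf'sm : StronglyMeasurable f' := hf.1.stronglyMeasurable_mk
  have hg'sm : StronglyMeasurable g' := hg.1.stronglyMeasurable_mk
  have hmono : volume.restrict (Set.Ioc (-π) π) ≤ volume.restrict (Set.Icc (-π) π) :=
    Measure.restrict_mono Set.Ioc_subset_Icc_self le_rfl
  have hfae : f =ᵐ[volume.restrict (Set.Ioc (-π) π)] f' :=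
    (ae_mono hmono) hf.1.ae_eq_mk
  have hgae : g =ᵐ[volume.restrict (Set.Ioc (-π) π)] g' :=
    (ae_mono hmono) hg.1.ae_eq_mk
  have hf' : MemLp f' ⊤ (volume.restrict (Set.Icc (-π) π)) := hf.ae_eq hf.1.ae_eq_mk
  have hg' : MemLp g' ⊤ (volume.restrict (Set.Icc (-π) π)) := hg.ae_eq hg.1.ae_eq_mk
  -- lifts to the circle
  set F : AddCircle (2 * π) → ℂ := AddCircle.liftIoc (2 * π) (-π) f' with hFdef
  set G : AddCircle (2 * π) → ℂ := AddCircle.liftIoc (2 * π) (-π) g' with hGdef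
  have hfc : ∀ m : ℤ, fc f m = fourierCoeff F m := fun m =>
    (fc_congr hfae m).trans (fc_eq_fourierCoeff f' m)
  have hgc : ∀ m : ℤ, fc g m = fourierCoeff G m := fun m =>
    (fc_congr hgae m).trans (fc_eq_fourierCoeff g' m)
  have hfgc : ∀ m : ℤ, fc (fun x => f x * g x) m = fourierCoeff (fun t => F t * G t) m := by
    intro m
    have h1 : (fun x => f x * g x) =ᵐ[volume.restrict (Set.Ioc (-π) π)]
        (fun x => f' x * g' x) := hfae.mul hgae
    rw [fc_congr h1 m, fc_eq_fourierCoeff (fun x => f' x * g' x) m]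
    rfl
  ext i j
  simp only [Matrix.sub_apply, Matrix.mul_apply, Tmat, Matrix.of_apply]
  -- convolution identity
  obtain ⟨hsum, hconv⟩ := fourierCoeff_conv F G (liftIoc_sm hf'sm) (liftIoc_sm hg'sm)
    (memLp_lift hf'sm hf') (memLp_lift hg'sm hg') ((i : ℤ) - (j : ℤ))
  set φ : ℤ → ℂ := fun l => fourierCoeff F ((i : ℤ) - l) * fourierCoeff G (l - (j : ℤ))
    with hφdef
  set ψ : ℤ → ℂ := fun k => fourierCoeff F ((i : ℤ) - (j : ℤ) - k) * fourierCoeff G k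
    with hψdef
  have hcomp : ∀ l : ℤ, ψ ((Equiv.subRight (j : ℤ)) l) = φ l := by
    intro l
    simp only [hψdef, hφdef, Equiv.subRight_apply]
    rw [show (i : ℤ) - (j : ℤ) - (l - (j : ℤ)) = (i : ℤ) - l by ring]
  have hφsum : Summable φ := by
    refine Summable.congr ?_ hcomp
    exact ((Equiv.subRight (j : ℤ)).summable_iff).mpr hsum
  have hre : fc (fun x => f x * g x) ((i : ℤ) - (j : ℤ)) = ∑' l : ℤ, φ l := by
    rw [hfgc, hconv, ← (Equiv.subRight (j : ℤ)).tsum_eq ψ]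
    exact tsum_congr hcomp
  rw [hre, tsum_int_split φ hφsum n]
  have hTsum : ∑ l : Fin n, fc f ((i : ℤ) - (l : ℤ)) * fc g ((l : ℤ) - (j : ℤ))
      = ∑ l : Fin n, φ (l : ℤ) := by
    refine Finset.sum_congr rfl fun l _ => ?_
    rw [hfc, hgc]
  rw [hTsum]
  have h1 : ∑' k : ℕ+, fc f (((i : ℤ) + 1) + (k : ℤ) - 1) *
      fc (fun x => g (-x)) ((k : ℤ) + ((j : ℤ) + 1) - 1) = ∑' k : ℕ+, φ (-(k : ℤ)) := by
    refine tsum_congr fun k => ?_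
    rw [fc_neg, hfc, hgc, hφdef]
    simp only
    rw [show (i : ℤ) + 1 + (k : ℤ) - 1 = (i : ℤ) - -(k : ℤ) by ring,
      show -((k : ℤ) + ((j : ℤ) + 1) - 1) = -(k : ℤ) - (j : ℤ) by ring]
  have h2 : ∑' k : ℕ+, fc (fun x => f (-x)) (((n : ℤ) - (i : ℤ)) + (k : ℤ) - 1) *
      fc g ((k : ℤ) + ((n : ℤ) - (j : ℤ)) - 1) = ∑' k : ℕ+, φ ((n : ℤ) + (k : ℤ) - 1) := by
    refine tsum_congr fun k => ?_
    rw [fc_neg, hfc, hgc, hφdef]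
    simp only
    rw [show -(((n : ℤ) - (i : ℤ)) + (k : ℤ) - 1) = (i : ℤ) - ((n : ℤ) + (k : ℤ) - 1) by ring,
      show (k : ℤ) + ((n : ℤ) - (j : ℤ)) - 1 = (n : ℤ) + (k : ℤ) - 1 - (j : ℤ) by ring]
  rw [h1, h2]
  ring
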